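/- For every ℓ ≥ 1 and t ≥ 0, the ℓ-th time derivative of v_{ℓ,0} equals the explicit profile v_ℓ, i.e. (d/dt)^ℓ v_{ℓ,0}(t) = Σ_{j=0}^{ℓ} binom(2ℓ, ℓ+j) ((−t)^j / j!) A^{ℓ+j} e^{−tA}(u0 + u1) − Σ_{k=0}^{ℓ−1} binom(2ℓ−1, ℓ+k) ((−t)^k / k!) A^{ℓ+k} e^{−tA} u0. -/

import Mathlib

open scoped RealInnerProductSpace

universe u

/-- The auxiliary profiles `v_{ℓ,0}(t)` from Section 2.2.1. -/
noncomputable def vl0 {H : Type u} [NormedAddCommGroup H] [InnerProductSpace ℝ H]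
    [CompleteSpace H] (A : H →L[ℝ] H) (u0 u1 : H) (ℓ : ℕ) (t : ℝ) : H :=
  ((-1 : ℝ) ^ ℓ) •
    ((∑ j ∈ Finset.range (ℓ + 1),
        ((ℓ.choose j : ℝ) * ((-t) ^ j / (Nat.factorial j : ℝ))) •
          ((A ^ j) (NormedSpace.exp ((-t) • A) (u0 + u1))))
      - ∑ j ∈ Finset.range ℓ,
          (((ℓ - 1).choose j : ℝ) * ((-t) ^ j / (Nat.factorial j : ℝ))) •
            ((A ^ j) (NormedSpace.exp ((-t) • A) u0)))

/-!
Each term `(-t)^j/j! • A^(p+j) e^{-tA} u` has derivative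
`-((-t)^(j-1)/(j-1)! • A^(p+j) + (-t)^j/j! • A^(p+j+1)) e^{-tA} u`. Hence differentiating
`∑ⱼ c j • (-t)^j/j! • A^(p+j) e^{-tA} u` raises `p` by one, replaces `c j` by `c j + c (j+1)` and
flips the sign. Starting from `c j = C(m, j)`, Pascal's rule makes the `k`-th derivative
`(-1)^k ∑ⱼ C(m+k, k+j) (-t)^j/j! • A^(k+j) e^{-tA} u`; taking `m = ℓ, ℓ - 1` and `k = ℓ`
gives `v_ℓ`.
-/

open Finset NormedSpace
open scoped Nat

theorem sum_range_succ_add_shift_smul {R M : Type*} [Semiring R] [AddCommMonoid M] [Module R M]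
    (c : ℕ → R) (v : ℕ → M) (n : ℕ) (hc : c (n + 1) = 0) :
    ∑ j ∈ range (n + 1), (c j + c (j + 1)) • v j
      = c 0 • v 0 + ∑ j ∈ range n, c (j + 1) • (v j + v (j + 1)) := by
  simp only [add_smul, smul_add, sum_add_distrib]
  rw [sum_range_succ (fun j => c (j + 1) • v j), hc, zero_smul, add_zero, sum_range_succ']
  abel

noncomputable section ExpProfile

variable {E : Type*} [NormedAddCommGroup E] [NormedSpace ℝ E]

def expMonomial (A : E →L[ℝ] E) (p j : ℕ) (u : E) (t : ℝ) : E :=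
  ((-t) ^ j / (j ! : ℝ)) • (A ^ (p + j)) (exp ((-t) • A) u)

def expProfile (A : E →L[ℝ] E) (p : ℕ) (c : ℕ → ℝ) (n : ℕ) (u : E) (t : ℝ) : E :=
  ∑ j ∈ range n, c j • expMonomial A p j u t

def binomExpProfile (A : E →L[ℝ] E) (m k n : ℕ) (u : E) : ℝ → E :=
  expProfile A k (fun j => ((m + k).choose (k + j) : ℝ)) n u

theorem binomExpProfile_apply (A : E →L[ℝ] E) (m k n : ℕ) (u : E) (t : ℝ) :
    binomExpProfile A m k n u t = ∑ j ∈ range n,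
      (((m + k).choose (k + j) : ℝ) * ((-t) ^ j / (j ! : ℝ))) • (A ^ (k + j)) (exp ((-t) • A) u) := by
  simp only [binomExpProfile, expProfile, expMonomial, smul_smul]

theorem binomExpProfile_succ (A : E →L[ℝ] E) {m n : ℕ} (hmn : m < n) (k : ℕ) (u : E) :
    binomExpProfile A m k (n + 1) u = binomExpProfile A m k n u := by
  funext t
  rw [binomExpProfile, expProfile, sum_range_succ, Nat.choose_eq_zero_of_lt (by omega),
    Nat.cast_zero, zero_smul, add_zero]
  rfl

variable [CompleteSpace E]

theorem hasDerivAt_pow_apply_exp_neg_smul (A : E →L[ℝ] E) (q : ℕ) (u : E) (t : ℝ) :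
    HasDerivAt (fun s : ℝ => (A ^ q) (exp ((-s) • A) u))
      (-(A ^ (q + 1)) (exp ((-t) • A) u)) t := by
  have hexp : HasDerivAt (fun s : ℝ => exp ((-s) • A)) (-(A * exp ((-t) • A))) t := by
    simpa [Function.comp_def] using
      (hasDerivAt_exp_smul_const' A (-t)).scomp t (hasDerivAt_neg t)
  simpa [Function.comp_def, pow_succ] using
    ((A ^ q).comp (ContinuousLinearMap.apply ℝ E u)).hasFDerivAt.comp_hasDerivAt t hexp

theorem hasDerivAt_expMonomial_zero (A : E →L[ℝ] E) (p : ℕ) (u : E) (t : ℝ) :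
    HasDerivAt (expMonomial A p 0 u) (-expMonomial A (p + 1) 0 u t) t := by
  show HasDerivAt (fun s => expMonomial A p 0 u s) _ t
  simpa [expMonomial] using hasDerivAt_pow_apply_exp_neg_smul A p u t

theorem hasDerivAt_expMonomial_succ (A : E →L[ℝ] E) (p j : ℕ) (u : E) (t : ℝ) :
    HasDerivAt (expMonomial A p (j + 1) u)
      (-(expMonomial A (p + 1) j u t + expMonomial A (p + 1) (j + 1) u t)) t := by
  have hcoef : HasDerivAt (fun s : ℝ => (-s) ^ (j + 1) / ((j + 1)! : ℝ))
      (-((-t) ^ j / (j ! : ℝ))) t := by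
    refine (((hasDerivAt_neg t).pow (j + 1)).div_const ((j + 1)! : ℝ)).congr_deriv ?_
    rw [Nat.factorial_succ]
    push_cast
    field_simp
  refine (hcoef.smul (hasDerivAt_pow_apply_exp_neg_smul A (p + (j + 1)) u t)).congr_deriv ?_
  simp only [expMonomial, show p + 1 + j = p + (j + 1) by omega,
    show p + 1 + (j + 1) = p + (j + 1) + 1 by omega, smul_neg, neg_smul]
  abel

theorem hasDerivAt_expProfile (A : E →L[ℝ] E) (p : ℕ) (c : ℕ → ℝ) (n : ℕ) (u : E) (t : ℝ)
    (hc : c (n + 1) = 0) :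
    HasDerivAt (expProfile A p c (n + 1) u)
      (-expProfile A (p + 1) (fun j => c j + c (j + 1)) (n + 1) u t) t := by
  have hsplit : expProfile A p c (n + 1) u
      = fun s => c 0 • expMonomial A p 0 u s
        + ∑ j ∈ range n, c (j + 1) • expMonomial A p (j + 1) u s := by
    funext s
    rw [expProfile, sum_range_succ', add_comm]
  rw [hsplit, expProfile, sum_range_succ_add_shift_smul c _ n hc]
  refine (((hasDerivAt_expMonomial_zero A p u t).const_smul (c 0)).add
    (HasDerivAt.fun_sum fun j _ =>
      (hasDerivAt_expMonomial_succ A p j u t).const_smul (c (j + 1)))).congr_deriv ?_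
  simp only [smul_neg, neg_add, smul_add, sum_add_distrib, sum_neg_distrib]

theorem hasDerivAt_binomExpProfile (A : E →L[ℝ] E) {m n : ℕ} (hmn : m ≤ n) (k : ℕ) (u : E)
    (t : ℝ) :
    HasDerivAt (binomExpProfile A m k (n + 1) u) (-binomExpProfile A m (k + 1) (n + 1) u t) t := by
  have hpascal : (fun j => ((m + k).choose (k + j) : ℝ) + ((m + k).choose (k + (j + 1)) : ℝ))
      = fun j => ((m + (k + 1)).choose (k + 1 + j) : ℝ) := by
    funext j
    rw [show m + (k + 1) = m + k + 1 by omega, show k + 1 + j = k + j + 1 by omega,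
      Nat.choose_succ_succ', Nat.cast_add]
    rfl
  have hvanish : ((m + k).choose (k + (n + 1)) : ℝ) = 0 := by
    rw [Nat.choose_eq_zero_of_lt (by omega), Nat.cast_zero]
  have hderiv := hasDerivAt_expProfile A k (fun j => ((m + k).choose (k + j) : ℝ)) n u t hvanish
  rwa [hpascal] at hderiv

end ExpProfile

theorem iteratedDeriv_eq_of_hasDerivAt_succ {𝕜 F : Type*} [NontriviallyNormedField 𝕜]
    [NormedAddCommGroup F] [NormedSpace 𝕜 F] {f : ℕ → 𝕜 → F}
    (hf : ∀ k x, HasDerivAt (f k) (f (k + 1) x) x) (k : ℕ) :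
    iteratedDeriv k (f 0) = f k := by
  induction k with
  | zero => rfl
  | succ k ih =>
    rw [iteratedDeriv_succ, ih]
    exact funext fun x => (hf k x).deriv

theorem vl0_eq_binomExpProfile {H : Type u} [NormedAddCommGroup H] [InnerProductSpace ℝ H]
    [CompleteSpace H] (A : H →L[ℝ] H) (u0 u1 : H) {ℓ : ℕ} (hℓ : 1 ≤ ℓ) :
    vl0 A u0 u1 ℓ = fun t => (-1 : ℝ) ^ ℓ •
      (binomExpProfile A ℓ 0 (ℓ + 1) (u0 + u1) t - binomExpProfile A (ℓ - 1) 0 (ℓ + 1) u0 t) := by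
  rw [binomExpProfile_succ A (by omega : ℓ - 1 < ℓ)]
  funext t
  simp only [vl0, binomExpProfile_apply, add_zero, zero_add]

theorem stmt_13_general {H : Type u} [NormedAddCommGroup H] [InnerProductSpace ℝ H] [CompleteSpace H]
    (A : H →L[ℝ] H) (u0 u1 : H) (ℓ : ℕ) (hℓ : 1 ≤ ℓ) (t : ℝ) :
    iteratedDeriv ℓ (vl0 A u0 u1 ℓ) t =
      (∑ j ∈ Finset.range (ℓ + 1),
          (((2 * ℓ).choose (ℓ + j) : ℝ) * ((-t) ^ j / (Nat.factorial j : ℝ))) •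
            ((A ^ (ℓ + j)) (NormedSpace.exp ((-t) • A) (u0 + u1))))
        - ∑ k ∈ Finset.range ℓ,
            (((2 * ℓ - 1).choose (ℓ + k) : ℝ) * ((-t) ^ k / (Nat.factorial k : ℝ))) •
              ((A ^ (ℓ + k)) (NormedSpace.exp ((-t) • A) u0)) := by
  set F : ℕ → ℝ → H := fun k s => (-1 : ℝ) ^ (ℓ + k) •
    (binomExpProfile A ℓ k (ℓ + 1) (u0 + u1) s - binomExpProfile A (ℓ - 1) k (ℓ + 1) u0 s)
  have hF : ∀ k s, HasDerivAt (F k) (F (k + 1) s) s := fun k s => by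
    refine (((hasDerivAt_binomExpProfile A le_rfl k (u0 + u1) s).sub
      (hasDerivAt_binomExpProfile A (Nat.sub_le ℓ 1) k u0 s)).const_smul _).congr_deriv ?_
    simp only [F, pow_succ, ← add_assoc, mul_neg_one, neg_smul, smul_sub, smul_neg]
  have hF0 : vl0 A u0 u1 ℓ = F 0 := vl0_eq_binomExpProfile A u0 u1 hℓ
  rw [hF0, iteratedDeriv_eq_of_hasDerivAt_succ hF]
  dsimp only [F]
  rw [binomExpProfile_succ A (by omega : ℓ - 1 < ℓ), binomExpProfile_apply, binomExpProfile_apply,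
    ← two_mul, (even_two_mul ℓ).neg_one_pow, one_smul, show ℓ - 1 + ℓ = 2 * ℓ - 1 by omega]

/-- `(d/dt)^ℓ v_{ℓ,0}(t)` equals the explicit asymptotic profile `v_ℓ(t)`. -/
theorem stmt_13 {H : Type u} [NormedAddCommGroup H] [InnerProductSpace ℝ H] [CompleteSpace H]
    (A : H →L[ℝ] H) (hA : IsSelfAdjoint A) (hApos : ∀ x : H, 0 ≤ ⟪A x, x⟫)
    (u0 u1 : H) (ℓ : ℕ) (hℓ : 1 ≤ ℓ) (t : ℝ) (ht : 0 ≤ t) :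
    iteratedDeriv ℓ (vl0 A u0 u1 ℓ) t =
      (∑ j ∈ Finset.range (ℓ + 1),
          (((2 * ℓ).choose (ℓ + j) : ℝ) * ((-t) ^ j / (Nat.factorial j : ℝ))) •
            ((A ^ (ℓ + j)) (NormedSpace.exp ((-t) • A) (u0 + u1))))
        - ∑ k ∈ Finset.range ℓ,
            (((2 * ℓ - 1).choose (ℓ + k) : ℝ) * ((-t) ^ k / (Nat.factorial k : ℝ))) •
              ((A ^ (ℓ + k)) (NormedSpace.exp ((-t) • A) u0)) :=
  stmt_13_general A u0 u1 ℓ hℓ t
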